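/- Let S be uniform on {0,1} and A the output of a binary erasure channel with erasure probability 3/4 applied to S. Then Wyner's common information satisfies C(S;A) = H(1/4), where H is the binary entropy function. In particular C(S;A) > I(S;A) = 1/4. -/

import Mathlib

/-- Binary entropy function (base-2 logs). -/
noncomputable def H2 (x : ℝ) : ℝ := -(x * Real.logb 2 x) - (1-x) * Real.logb 2 (1-x)

/-- Output alphabet of the binary erasure channel: 0, e, 1. -/
inductive OutA | o0 | oe | o1
deriving DecidableEq

instance : Fintype OutA where
  elems := {OutA.o0, OutA.oe, OutA.o1}
  complete := by intro x; cases x <;> simp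

/-- Target joint pmf of (S,A): S uniform, A = S w.p. 1/4, A = e w.p. 3/4. -/
noncomputable def jSA : Bool → OutA → ℝ :=
  fun s a =>
    match s, a with
    | _, .oe => 3/8
    | false, .o0 => 1/8
    | true, .o1 => 1/8
    | _, _ => 0

/-- `q` is a joint pmf on S × U × A. -/
def IsJoint {n : ℕ} (q : Bool → Fin n → OutA → ℝ) : Prop :=
  (∀ s u a, 0 ≤ q s u a) ∧ ∑ s : Bool, ∑ u : Fin n, ∑ a : OutA, q s u a = 1

/-- The (S,A)-marginal of `q` is the erasure-channel joint pmf. -/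
def HasMarginal {n : ℕ} (q : Bool → Fin n → OutA → ℝ) : Prop :=
  ∀ s a, (∑ u : Fin n, q s u a) = jSA s a

/-- S and A are conditionally independent given U:
P(s,u,a)·P(u) = P(s,u)·P(u,a). -/
def CondIndep {n : ℕ} (q : Bool → Fin n → OutA → ℝ) : Prop :=
  ∀ s u a, q s u a * (∑ s' : Bool, ∑ a' : OutA, q s' u a') =
    (∑ a' : OutA, q s u a') * (∑ s' : Bool, q s' u a)

/-- Mutual information I((S,A);U) in bits. -/
noncomputable def ISAU {n : ℕ} (q : Bool → Fin n → OutA → ℝ) : ℝ :=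
  ∑ s : Bool, ∑ u : Fin n, ∑ a : OutA,
    q s u a * Real.logb 2 (q s u a /
      ((∑ u' : Fin n, q s u' a) * (∑ s' : Bool, ∑ a' : OutA, q s' u a')))

open Real

lemma OutA.sum_eq (f : OutA → ℝ) : ∑ a, f a = f .o0 + f .oe + f .o1 := by
  rw [show (Finset.univ : Finset OutA) = {.o0, .oe, .o1} from rfl]
  simp only [Finset.mem_insert, Finset.mem_singleton, reduceCtorEq, or_self,
    not_false_eq_true, Finset.sum_insert, Finset.sum_singleton]
  ring

/-- `U = 0` and `U = 1` reveal `S` (each with probability 1/4, after which `A` is an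
independent fair choice between `S` and `e`); `U = 2` (probability 1/2) forces `A = e`
and leaves `S` uniform. -/
noncomputable def wynerCoupling : Bool → Fin 3 → OutA → ℝ :=
  fun s u a =>
    match s, u, a with
    | false, 0, .o0 => 1/8
    | false, 0, .oe => 1/8
    | true, 1, .o1 => 1/8
    | true, 1, .oe => 1/8
    | _, 2, .oe => 1/4
    | _, _, _ => 0

lemma isJoint_wynerCoupling : IsJoint wynerCoupling := by
  refine ⟨fun s u a => ?_, ?_⟩
  · cases s <;> fin_cases u <;> cases a <;> simp [wynerCoupling]
  · simp only [Fintype.sum_bool, Fin.sum_univ_three, OutA.sum_eq, wynerCoupling]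
    norm_num

lemma hasMarginal_wynerCoupling : HasMarginal wynerCoupling := by
  intro s a
  cases s <;> cases a <;> simp only [Fin.sum_univ_three, jSA, wynerCoupling] <;> norm_num

lemma condIndep_wynerCoupling : CondIndep wynerCoupling := by
  intro s u a
  cases s <;> fin_cases u <;> cases a <;>
    simp only [Fintype.sum_bool, OutA.sum_eq, wynerCoupling] <;> norm_num

lemma logb_two_four : logb 2 4 = 2 := by
  rw [show (4 : ℝ) = 2 ^ 2 by norm_num, logb_pow, logb_self_eq_one one_lt_two]
  norm_num

lemma H2_one_quarter : H2 (1/4) = 2 - 3/4 * logb 2 3 := by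
  rw [H2, show (1 : ℝ) - 1/4 = 3/4 by norm_num, one_div, logb_inv,
    logb_div (by norm_num) (by norm_num), logb_two_four]
  ring

/-- The six atoms of `wynerCoupling` give `I(S,A;U) = 2 · (1/8) · log₂ 4 + (3/4) · log₂ (4/3)`. -/
lemma ISAU_wynerCoupling : ISAU wynerCoupling = H2 (1/4) := by
  simp only [ISAU, Fintype.sum_bool, Fin.sum_univ_three, OutA.sum_eq, wynerCoupling]
  norm_num
  rw [H2_one_quarter, logb_div (by norm_num) (by norm_num), logb_two_four]
  ring

lemma logb_two_three_lt : logb 2 3 < 7/3 := by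
  have h : 3 * logb 2 3 < 7 := calc
    3 * logb 2 3 = logb 2 (3 ^ 3) := by rw [logb_pow]; norm_num
    _ < logb 2 (2 ^ 7) := logb_lt_logb one_lt_two (by norm_num) (by norm_num)
    _ = 7 := by rw [logb_pow, logb_self_eq_one one_lt_two]; norm_num
  linarith

/-- Achievability of Wyner's common information C(S;A) = H(1/4) for the erasure
channel joint distribution, and H(1/4) > 1/4 = I(S;A). -/
theorem stmt10 :
    (∃ (n : ℕ) (q : Bool → Fin n → OutA → ℝ),
      IsJoint q ∧ HasMarginal q ∧ CondIndep q ∧ ISAU q = H2 (1/4)) ∧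
    H2 (1/4) > 1/4 := by
  refine ⟨⟨3, wynerCoupling, isJoint_wynerCoupling, hasMarginal_wynerCoupling,
    condIndep_wynerCoupling, ISAU_wynerCoupling⟩, ?_⟩
  rw [H2_one_quarter]
  linarith [logb_two_three_lt]
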